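/- Let n' := ½(m₁ + m₃) and σ' := convexHull{0, n', −½v}. Then −½w + σ' ⊆ V. -/
import Mathlib


/-!
STATEMENT 16: For the hexagonal Voronoi cell `V` of `𝖯 = ℤu + ℤv` (strictly obtuse
superbasis `u, v, w = −u−v`), with `n' := ½(m₁ + m₃)` and
`σ' := convexHull{0, n', −½v}`, one has `−½w + σ' ⊆ V`.
-/

noncomputable section

/-- The standard inner product on `ℝ × ℝ`. -/
def ip (x y : ℝ × ℝ) : ℝ := x.1 * y.1 + x.2 * y.2

/-- The lattice `ℤu + ℤv` as a subset of `ℝ × ℝ`. -/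
def lat (u v : ℝ × ℝ) : Set (ℝ × ℝ) :=
  {p | ∃ m n : ℤ, p = (m : ℝ) • u + (n : ℝ) • v}

/-- The Voronoi cell of the lattice `ℤu + ℤv` around the origin. -/
def vorCell (u v : ℝ × ℝ) : Set (ℝ × ℝ) :=
  {y | ∀ p ∈ lat u v, ip y y ≤ ip (y - p) (y - p)}

/-- For an integer `k`, `|k| ≤ k²` (as reals). -/
lemma ip_abs_le_sq_cast (k : ℤ) : ((|k| : ℤ) : ℝ) ≤ (k : ℝ)^2 := by
  have h : |k| ≤ k^2 := by
    rcases eq_or_ne k 0 with rfl | hk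
    · simp
    · have h1 : 1 ≤ |k| := Int.one_le_abs (by simpa using hk)
      nlinarith [sq_abs k]
  calc ((|k| : ℤ) : ℝ) ≤ ((k^2 : ℤ) : ℝ) := by exact_mod_cast h
    _ = (k:ℝ)^2 := by push_cast; ring

/-- Key arithmetic lemma: if `y` satisfies the three half-plane bounds of an obtuse
superbasis (with Gram data `a, b, c`), then the Voronoi inequality holds for every
lattice point `m u + n v`. -/
lemma ip_key_lemma (a b c α β : ℝ) (hb : b ≤ 0) (hab : 0 ≤ a + b) (hbc : 0 ≤ b + c)
    (hα : |2*α| ≤ a) (hβ : |2*β| ≤ c)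
    (hs : |2*(α+β)| ≤ a + 2*b + c) (m n : ℤ) :
    2*((m:ℝ)*α + (n:ℝ)*β) ≤ (m:ℝ)^2*a + 2*(m:ℝ)*(n:ℝ)*b + (n:ℝ)^2*c := by
  have ha : 0 ≤ a := le_trans (abs_nonneg _) hα
  have hc : 0 ≤ c := le_trans (abs_nonneg _) hβ
  have hd : 0 ≤ a + 2*b + c := le_trans (abs_nonneg _) hs
  have key2 : ∀ (k : ℤ) (γ e : ℝ), |2*γ| ≤ e → 0 ≤ e → 2*(k:ℝ)*γ ≤ (k:ℝ)^2 * e := by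
    intro k γ e h he
    have h1 : 2*(k:ℝ)*γ ≤ |(k:ℝ)| * e := by
      calc 2*(k:ℝ)*γ = (k:ℝ) * (2*γ) := by ring
        _ ≤ |(k:ℝ) * (2*γ)| := le_abs_self _
        _ = |(k:ℝ)| * |2*γ| := abs_mul _ _
        _ ≤ |(k:ℝ)| * e := mul_le_mul_of_nonneg_left h (abs_nonneg _)
    have h2 : |(k:ℝ)| * e ≤ (k:ℝ)^2 * e := by
      apply mul_le_mul_of_nonneg_right _ he
      rw [← Int.cast_abs]
      exact ip_abs_le_sq_cast k
    linarith
  rcases le_or_gt (m*n : ℤ) 0 with hmn | hmn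
  · have hbn : 0 ≤ (m:ℝ)*(n:ℝ)*b := by
      have h0 : ((m:ℝ))*(n:ℝ) ≤ 0 := by exact_mod_cast hmn
      nlinarith
    have k1 := key2 m α a hα ha
    have k2 := key2 n β c hβ hc
    linarith
  · rcases le_or_gt 0 ((m-n)*n) with h' | h'
    · have k1 := key2 (m-n) α a hα ha
      have k2 := key2 n (α+β) (a+2*b+c) hs hd
      have h5 : 0 ≤ ((m:ℝ)-n)*n*(a+b) := by
        have h0 : (0:ℝ) ≤ ((m:ℝ)-n)*n := by exact_mod_cast h'
        exact mul_nonneg h0 hab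
      push_cast at k1
      nlinarith [k1, k2, h5]
    · have h'' : 0 ≤ (n-m)*m := by
        nlinarith [hmn, h', sq_nonneg (m-n), sq_nonneg m, sq_nonneg n, mul_pos hmn hmn]
      have k1 := key2 (n-m) β c hβ hc
      have k2 := key2 m (α+β) (a+2*b+c) hs hd
      have h5 : 0 ≤ ((n:ℝ)-m)*m*(b+c) := by
        have h0 : (0:ℝ) ≤ ((n:ℝ)-m)*m := by exact_mod_cast h''
        exact mul_nonneg h0 hbc
      push_cast at k1
      nlinarith [k1, k2, h5]

/-- A point satisfying the three half-plane bounds lies in the Voronoi cell. -/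
lemma ip_mem_vorCell_of_bounds (u v y : ℝ × ℝ)
    (hb : ip u v ≤ 0)
    (hab : 0 ≤ ip u u + ip u v) (hbc : 0 ≤ ip u v + ip v v)
    (hα : |2 * ip y u| ≤ ip u u) (hβ : |2 * ip y v| ≤ ip v v)
    (hs : |2 * (ip y u + ip y v)| ≤ ip u u + 2 * ip u v + ip v v) :
    y ∈ vorCell u v := by
  intro P hP
  obtain ⟨m, n, rfl⟩ := hP
  have K := ip_key_lemma (ip u u) (ip u v) (ip v v) (ip y u) (ip y v) hb hab hbc hα hβ hs m n
  obtain ⟨y1, y2⟩ := y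
  obtain ⟨u1, u2⟩ := u
  obtain ⟨v1, v2⟩ := v
  simp only [ip, Prod.smul_mk, smul_eq_mul, Prod.mk_add_mk, Prod.mk_sub_mk] at K ⊢
  nlinarith [K]

/-- The half-plane bounds hold for any point of the translated triangle. -/
lemma ip_bounds_lemma (A B C c1 c2 α β : ℝ) (hB : B ≤ 0) (hAB : 0 ≤ A + B) (hBC : 0 ≤ B + C)
    (hc1 : 0 ≤ c1) (hc2 : 0 ≤ c2) (hc : c1 + c2 ≤ 1)
    (eα : 2*α = A + (1 - c1 - c2) * B) (eβ : 2*β = (1 + c1) * B + (1 - c2) * C) :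
    |2*α| ≤ A ∧ |2*β| ≤ C ∧ |2*(α+β)| ≤ A + 2*B + C := by
  have hA : 0 ≤ A := by linarith
  have hC : 0 ≤ C := by linarith
  have p1 : (1 - c1 - c2) * B ≤ 0 := mul_nonpos_of_nonneg_of_nonpos (by linarith) hB
  have p2 : (c1 + c2) * B ≤ 0 := mul_nonpos_of_nonneg_of_nonpos (by linarith) hB
  have p3 : (1 + c1) * B ≤ 0 := mul_nonpos_of_nonneg_of_nonpos (by linarith) hB
  have p4 : 0 ≤ c2 * C := mul_nonneg hc2 hC
  have p5 : 0 ≤ (1 + c1) * (B + C) := mul_nonneg (by linarith) hBC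
  have p6 : 0 ≤ (1 - c2 - c1) * C := mul_nonneg (by linarith) hC
  have p7 : 0 ≤ c2 * (B + C) := mul_nonneg hc2 hBC
  have p8 : 0 ≤ (1 - c2) * (B + C) := mul_nonneg (by linarith) hBC
  refine ⟨abs_le.2 ⟨?_, ?_⟩, abs_le.2 ⟨?_, ?_⟩, abs_le.2 ⟨?_, ?_⟩⟩ <;>
    nlinarith [p1, p2, p3, p4, p5, p6, p7, p8]

theorem translate_of_sigma_prime_in_voronoi_cell
    (u v w : ℝ × ℝ) (hw : w = -u - v)
    (huv : ip u v < 0) (huw : ip u w < 0) (hvw : ip v w < 0)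
    (m₁ m₃ : ℝ × ℝ)
    (hm₁ : ip m₁ w = ip w w / 2 ∧ ip m₁ v = -(ip v v / 2))
    (hm₃ : ip m₃ u = ip u u / 2 ∧ ip m₃ w = -(ip w w / 2)) :
    ∀ x ∈ convexHull ℝ
        ({0, (1 / 2 : ℝ) • (m₁ + m₃), -((1 / 2 : ℝ) • v)} : Set (ℝ × ℝ)),
      -((1 / 2 : ℝ) • w) + x ∈ vorCell u v := by
  obtain ⟨h1, h2⟩ := hm₁
  obtain ⟨h3, h4⟩ := hm₃
  subst hw
  intro x hx
  rw [convexHull_insert (Set.insert_nonempty _ _), mem_convexJoin] at hx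
  obtain ⟨o, ho, z, hz, hxz⟩ := hx
  rw [Set.mem_singleton_iff] at ho
  subst ho
  rw [convexHull_pair] at hz
  obtain ⟨s, t, hs0, ht0, hst, rfl⟩ := hz
  obtain ⟨p, q, hp0, hq0, hpq, rfl⟩ := hxz
  obtain ⟨u1, u2⟩ := u
  obtain ⟨v1, v2⟩ := v
  obtain ⟨a1, a2⟩ := m₁
  obtain ⟨b1, b2⟩ := m₃
  simp only [ip, Prod.smul_mk, smul_eq_mul, Prod.mk_add_mk, Prod.mk_sub_mk, Prod.neg_mk,
    Prod.fst, Prod.snd] at h1 h2 h3 h4 huv huw hvw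
  have hb : ip (u1, u2) (v1, v2) ≤ 0 := le_of_lt huv
  have hab : 0 ≤ ip (u1, u2) (u1, u2) + ip (u1, u2) (v1, v2) := by
    simp only [ip]; linarith [huw]
  have hbc : 0 ≤ ip (u1, u2) (v1, v2) + ip (v1, v2) (v1, v2) := by
    simp only [ip]; linarith [hvw]
  have hc1 : 0 ≤ q * s := mul_nonneg hq0 hs0
  have hc2 : 0 ≤ q * t := mul_nonneg hq0 ht0
  have hcs : q * s + q * t ≤ 1 := by nlinarith
  set Y : ℝ × ℝ := -((1/2 : ℝ) • (-(u1, u2) - (v1, v2))) +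
      (p • (0 : ℝ × ℝ) +
        q • (s • ((1/2 : ℝ) • ((a1, a2) + (b1, b2))) + t • (-((1/2 : ℝ) • (v1, v2))))) with hY
  have eα : 2 * ip Y (u1, u2) =
      ip (u1, u2) (u1, u2) + (1 - q*s - q*t) * ip (u1, u2) (v1, v2) := by
    simp only [hY, ip, Prod.smul_mk, smul_eq_mul, Prod.mk_add_mk, Prod.mk_sub_mk, Prod.neg_mk,
      smul_zero, Prod.fst_add, Prod.snd_add, Prod.fst_zero, Prod.snd_zero]
    linear_combination (-(q*s)) * h1 + (-(q*s)) * h2 + (q*s) * h3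
  have eβ : 2 * ip Y (v1, v2) =
      (1 + q*s) * ip (u1, u2) (v1, v2) + (1 - q*t) * ip (v1, v2) (v1, v2) := by
    simp only [hY, ip, Prod.smul_mk, smul_eq_mul, Prod.mk_add_mk, Prod.mk_sub_mk, Prod.neg_mk,
      smul_zero, Prod.fst_add, Prod.snd_add, Prod.fst_zero, Prod.snd_zero]
    linear_combination (q*s) * h2 + (-(q*s)) * h4 + (-(q*s)) * h3
  obtain ⟨B1, B2, B3⟩ := ip_bounds_lemma (ip (u1,u2) (u1,u2)) (ip (u1,u2) (v1,v2))
    (ip (v1,v2) (v1,v2)) (q*s) (q*t) (ip Y (u1,u2)) (ip Y (v1,v2)) hb hab hbc hc1 hc2 hcs eα eβ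
  exact ip_mem_vorCell_of_bounds _ _ _ hb hab hbc B1 B2 B3

end
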